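/- If the abstract actions A_F are sound relative to a generalized problem Q, I_F holds in the abstract state of the initial state of every instance P ∈ Q whose initial state satisfies I_F and whose goal G satisfies G_F ⊨ G, and π is a policy over abstract states such that every π-induced abstract execution from any abstract state satisfying I_F reaches an abstract state satisfying G_F in finitely many steps (π 'solves' the abstraction under conditionally-fair semantics), then every concrete trajectory induced by π in such an instance P reaches a goal state of P; i.e., π solves P. -/

import Mathlib

inductive Change
  | inc | dec | same
deriving DecidableEq

def delta (v v' : ℕ) : Change := if v < v' then .inc else if v' < v then .dec else .same

structure PInstance (State Action : Type) where
  init : State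
  applicable : State → Action → Prop
  succ : State → Action → State
  goal : State → Prop

inductive Reachable {State Action : Type} (P : PInstance State Action) : State → Prop
  | init : Reachable P P.init
  | step {s a} : Reachable P s → P.applicable s a → Reachable P (P.succ s a)

structure AbsAction (F : Type) where
  pre : F → Option Bool
  eff : F → Change

def absOf {State F : Type} (val : F → State → ℕ) (s : State) : F → Bool :=
  fun f => decide (val f s = 0)

def AppAbs {F : Type} (b : F → Bool) (a : AbsAction F) : Prop :=
  ∀ (f : F) (c : Bool), a.pre f = some c → b f = c

def SameEff {State F : Type} (val : F → State → ℕ) (a : AbsAction F) (s s' : State) : Prop :=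
  ∀ f, a.eff f = delta (val f s) (val f s')

def Instantiates {State Action F : Type} (val : F → State → ℕ) (P : PInstance State Action)
    (act : Action) (a : AbsAction F) (s : State) : Prop :=
  P.applicable s act ∧ AppAbs (absOf val s) a ∧ SameEff val a s (P.succ s act)

def SoundQ {State Action F : Type} (Q : Set (PInstance State Action))
    (val : F → State → ℕ) (A : Set (AbsAction F)) : Prop :=
  ∀ P ∈ Q, ∀ s, Reachable P s → ∀ a ∈ A, AppAbs (absOf val s) a →
    ∃ act, Instantiates val P act a s

def CompleteQ {State Action F : Type} (Q : Set (PInstance State Action))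
    (val : F → State → ℕ) (A : Set (AbsAction F)) : Prop :=
  ∀ P ∈ Q, ∀ s, Reachable P s → ∀ act, P.applicable s act →
    ∃ a ∈ A, AppAbs (absOf val s) a ∧ SameEff val a s (P.succ s act)

def IsSample {State Action : Type} (Q : Set (PInstance State Action))
    (S : Set (State × State × PInstance State Action)) : Prop :=
  S.Nonempty ∧
  (∀ x ∈ S, x.2.2 ∈ Q ∧ Reachable x.2.2 x.1 ∧
    ∃ a, x.2.2.applicable x.1 a ∧ x.2.1 = x.2.2.succ x.1 a) ∧
  (∀ x ∈ S, ∀ a, x.2.2.applicable x.1 a → (x.1, x.2.2.succ x.1 a, x.2.2) ∈ S)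

def SoundS {State Action F : Type} (val : F → State → ℕ) (A : Set (AbsAction F))
    (S : Set (State × State × PInstance State Action)) : Prop :=
  ∀ x ∈ S, ∀ a ∈ A, AppAbs (absOf val x.1) a →
    ∃ s'', (x.1, s'', x.2.2) ∈ S ∧ SameEff val a x.1 s''

def CompleteS {State Action F : Type} (val : F → State → ℕ) (A : Set (AbsAction F))
    (S : Set (State × State × PInstance State Action)) : Prop :=
  ∀ x ∈ S, ∃ a ∈ A, AppAbs (absOf val x.1) a ∧ SameEff val a x.1 x.2.1

/-- Abstract successor: applying the effects of `a` to abstract state `b` may yield `b'`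
(increments make the atom n=0 false, decrements are nondeterministic, untouched
features keep their value). -/
def AbsSucc {F : Type} (a : AbsAction F) (b b' : F → Bool) : Prop :=
  ∀ f, match a.eff f with
  | Change.inc => b' f = false
  | Change.dec => True
  | Change.same => b' f = b f

/-- Conditional fairness of an abstract execution: if a feature is decremented
infinitely often and incremented only finitely often, then its atom n=0 holds
infinitely often. -/
def FairAbs {F : Type} (b : ℕ → F → Bool) (acts : ℕ → AbsAction F) : Prop :=
  ∀ f, (∀ N, ∃ i ≥ N, (acts i).eff f = Change.dec) →
    (∃ N, ∀ i ≥ N, (acts i).eff f ≠ Change.inc) →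
    ∀ N, ∃ i ≥ N, b i f = true

/-- π solves the abstraction under conditionally-fair semantics: every conditionally
fair abstract execution of π from an abstract state satisfying I_F reaches an
abstract state satisfying G_F in finitely many steps. -/
def SolvesAbs {F : Type} (π : (F → Bool) → Option (AbsAction F))
    (IF GF : (F → Bool) → Prop) : Prop :=
  ∀ (b : ℕ → F → Bool) (acts : ℕ → AbsAction F),
    IF (b 0) →
    (∀ i, (∀ j ≤ i, ¬ GF (b j)) →
      π (b i) = some (acts i) ∧ AppAbs (b i) (acts i) ∧
        AbsSucc (acts i) (b i) (b (i+1))) →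
    FairAbs b acts →
    ∃ n, GF (b n)

/-!
Because instantiated actions have the same qualitative effects, a concrete π-trajectory that
never meets the goal projects, state by state, to an infinite abstract execution of π from
`I_F`. That execution is conditionally fair for free: a feature with values in `ℕ` that is
eventually never incremented is eventually antitone, so it is decremented only finitely often.
Hence the execution reaches `G_F`, and `G_F ⊨ G` on reachable states gives a goal state.
-/

theorem exists_forall_ge_not_succ_lt_of_forall_ge_succ_le {α : Type*} [PartialOrder α]
    [WellFoundedLT α] {f : ℕ → α} {k : ℕ} (hf : ∀ n ≥ k, f (n + 1) ≤ f n) :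
    ∃ N, ∀ n ≥ N, ¬ f (n + 1) < f n := by
  obtain ⟨m, hm⟩ := WellFoundedLT.antitone_chain_condition (antitone_add_nat_of_succ_le hf)
  refine ⟨m + k, fun n hn hlt => ?_⟩
  have h₁ := hm (n - k) (by omega)
  have h₂ := hm (n - k + 1) (by omega)
  rw [Nat.sub_add_cancel (by omega)] at h₁
  rw [show n - k + 1 + k = n + 1 by omega] at h₂
  exact hlt.ne (h₂.symm.trans h₁)

theorem delta_eq_inc_iff {v v' : ℕ} : delta v v' = .inc ↔ v < v' := by
  unfold delta; split_ifs <;> simp_all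

theorem delta_eq_dec_iff {v v' : ℕ} : delta v v' = .dec ↔ v' < v := by
  unfold delta; split_ifs <;> grind

theorem delta_eq_same_iff {v v' : ℕ} : delta v v' = .same ↔ v = v' := by
  unfold delta; split_ifs <;> grind

section Abstraction

variable {State Action F : Type} (val : F → State → ℕ)

theorem absSucc_absOf {a : AbsAction F} {s s' : State} (h : SameEff val a s s') :
    AbsSucc a (absOf val s) (absOf val s') := by
  intro f
  have hf := h f
  cases hc : a.eff f <;> rw [hc, eq_comm] at hf <;> simp only [absOf]
  case inc => simpa using (delta_eq_inc_iff.mp hf).ne_bot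
  case same => rw [delta_eq_same_iff.mp hf]

theorem fairAbs_absOf {s : ℕ → State} {acts : ℕ → AbsAction F}
    (h : ∀ i, SameEff val (acts i) (s i) (s (i + 1))) :
    FairAbs (fun i => absOf val (s i)) acts := by
  intro f hdec ⟨N, hN⟩
  have hle : ∀ i ≥ N, val f (s (i + 1)) ≤ val f (s i) := fun i hi =>
    not_lt.mp fun hlt => hN i hi (by rw [h i f]; exact delta_eq_inc_iff.mpr hlt)
  obtain ⟨M, hM⟩ :=
    exists_forall_ge_not_succ_lt_of_forall_ge_succ_le (f := fun i => val f (s i)) hle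
  obtain ⟨i, hi, hidec⟩ := hdec M
  rw [h i f] at hidec
  exact absurd (delta_eq_dec_iff.mp hidec) (hM i hi)

theorem reachable_of_forall_applicable {P : PInstance State Action} {s : ℕ → State}
    {acts : ℕ → Action} (h₀ : s 0 = P.init)
    (hstep : ∀ i, P.applicable (s i) (acts i) ∧ s (i + 1) = P.succ (s i) (acts i)) (i : ℕ) :
    Reachable P (s i) := by
  induction i with
  | zero => exact h₀ ▸ .init
  | succ i ih => exact (hstep i).2 ▸ .step ih (hstep i).1

end Abstraction

theorem stmt11_general {State Action F : Type}
    (val : F → State → ℕ)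
    (π : (F → Bool) → Option (AbsAction F))
    (IF GF : (F → Bool) → Prop)
    (P : PInstance State Action)
    (hI : IF (absOf val P.init))
    (hG : ∀ s, Reachable P s → GF (absOf val s) → P.goal s)
    (hsolves : SolvesAbs π IF GF) :
    ∀ (s : ℕ → State) (acts : ℕ → Action), s 0 = P.init →
      (∀ i, (∀ j ≤ i, ¬ P.goal (s j)) →
        ∃ a, π (absOf val (s i)) = some a ∧ Instantiates val P (acts i) a (s i) ∧
          s (i+1) = P.succ (s i) (acts i)) →
      ∃ n, P.goal (s n) := by
  intro s acts h₀ htraj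
  by_contra! hnogoal
  choose absActs hπ hinst hsucc using fun i => htraj i fun j _ => hnogoal j
  have hsame : ∀ i, SameEff val (absActs i) (s i) (s (i + 1)) := fun i =>
    hsucc i ▸ (hinst i).2.2
  have hreach := reachable_of_forall_applicable h₀ fun i => ⟨(hinst i).1, hsucc i⟩
  obtain ⟨n, hn⟩ := hsolves (fun i => absOf val (s i)) absActs (h₀ ▸ hI)
    (fun i _ => ⟨hπ i, (hinst i).2.1, absSucc_absOf val (hsame i)⟩) (fairAbs_absOf val hsame)
  exact hnogoal n (hG (s n) (hreach n) hn)

/-- If A_F is sound relative to Q, the instance P ∈ Q satisfies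
I ⊨ I_F and G_F ⊨ G, and the policy π solves the abstraction under conditionally
fair semantics, then every concrete trajectory induced by π in P reaches a goal
state of P: π solves P. -/
theorem stmt11 {State Action F : Type} (Q : Set (PInstance State Action))
    (val : F → State → ℕ) (A : Set (AbsAction F)) (hsound : SoundQ Q val A)
    (π : (F → Bool) → Option (AbsAction F)) (hπA : ∀ b a, π b = some a → a ∈ A)
    (IF GF : (F → Bool) → Prop)
    (P : PInstance State Action) (hP : P ∈ Q)
    (hI : IF (absOf val P.init))
    (hG : ∀ s, Reachable P s → GF (absOf val s) → P.goal s)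
    (hsolves : SolvesAbs π IF GF) :
    ∀ (s : ℕ → State) (acts : ℕ → Action), s 0 = P.init →
      (∀ i, (∀ j ≤ i, ¬ P.goal (s j)) →
        ∃ a, π (absOf val (s i)) = some a ∧ Instantiates val P (acts i) a (s i) ∧
          s (i+1) = P.succ (s i) (acts i)) →
      ∃ n, P.goal (s n) :=
  stmt11_general val π IF GF P hI hG hsolves
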